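/- arXiv:2402.08554 — 6 statements merged into one kernel-verified Lean document; each statement's English description precedes it below -/
import Mathlib

section
/- Let N ≥ 1 and let a¹, a², b¹, b² : {1,…,N} → ℝ be non-increasing finite sequences with Σ_{r=1}^N a¹_r = Σ_{r=1}^N a²_r and Σ_{r=1}^N b¹_r = Σ_{r=1}^N b²_r. Assume that for every convex function φ : ℝ → ℝ one has Σ_{r=1}^N φ(a¹_r) ≥ Σ_{r=1}^N φ(a²_r) and Σ_{r=1}^N φ(b¹_r) ≥ Σ_{r=1}^N φ(b²_r). Then for every convex function φ : ℝ → ℝ, Σ_{r=1}^N φ(a¹_r + b¹_r) ≥ Σ_{r=1}^N φ(a²_r + b²_r). -/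
open Finset

section Aux

variable {φ : ℝ → ℝ}

private lemma adjSlope (hφ : ConvexOn ℝ Set.univ φ) {x y z : ℝ} (hxy : x < y) (hyz : y < z) :
    (φ y - φ x) / (y - x) ≤ (φ z - φ y) / (z - y) :=
  hφ.slope_mono_adjacent (Set.mem_univ x) (Set.mem_univ z) hxy hyz

private lemma sec_mono_right (hφ : ConvexOn ℝ Set.univ φ) {x y z : ℝ}
    (hxy : x < y) (hyz : y ≤ z) :
    (φ y - φ x) / (y - x) ≤ (φ z - φ x) / (z - x) := by
  rcases eq_or_lt_of_le hyz with rfl | hyz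
  · exact le_rfl
  · have h := adjSlope hφ hxy hyz
    rw [div_le_div_iff₀ (by linarith) (by linarith)] at h ⊢
    nlinarith [h]

private lemma sec_mono_left (hφ : ConvexOn ℝ Set.univ φ) {x y z : ℝ}
    (hxy : x ≤ y) (hyz : y < z) :
    (φ z - φ x) / (z - x) ≤ (φ z - φ y) / (z - y) := by
  rcases eq_or_lt_of_le hxy with rfl | hxy
  · exact le_rfl
  · have h := adjSlope hφ hxy hyz
    rw [div_le_div_iff₀ (by linarith) (by linarith)] at h ⊢
    nlinarith [h]

/-- General secant slope monotonicity. -/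
private lemma sec_mono (hφ : ConvexOn ℝ Set.univ φ) {a b c d : ℝ}
    (hab : a < b) (hcd : c < d) (hac : a ≤ c) (hbd : b ≤ d) :
    (φ b - φ a) / (b - a) ≤ (φ d - φ c) / (d - c) :=
  (sec_mono_right hφ hab hbd).trans (sec_mono_left hφ hac hcd)

/-- The right-slope set of a convex function at a point. -/
private noncomputable def rg (φ : ℝ → ℝ) (x : ℝ) : ℝ :=
  sInf ((fun y => (φ y - φ x) / (y - x)) '' Set.Ioi x)

private lemma rg_bdd (hφ : ConvexOn ℝ Set.univ φ) (x : ℝ) :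
    BddBelow ((fun y => (φ y - φ x) / (y - x)) '' Set.Ioi x) := by
  refine ⟨(φ x - φ (x - 1)) / (x - (x - 1)), ?_⟩
  rintro - ⟨y, hy, rfl⟩
  exact sec_mono hφ (by linarith) hy (by linarith) (le_of_lt hy)

private lemma rg_le_slope (hφ : ConvexOn ℝ Set.univ φ) {x y : ℝ} (h : x < y) :
    rg φ x ≤ (φ y - φ x) / (y - x) :=
  csInf_le (rg_bdd hφ x) ⟨y, h, rfl⟩

private lemma slope_le_rg (hφ : ConvexOn ℝ Set.univ φ) {w x : ℝ} (h : w < x) :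
    (φ x - φ w) / (x - w) ≤ rg φ x := by
  refine le_csInf ⟨_, ⟨x + 1, by simp, rfl⟩⟩ ?_
  rintro - ⟨y, hy, rfl⟩
  exact sec_mono hφ h hy (le_of_lt h) (le_of_lt hy)

/-- `rg` is a subgradient: supporting line inequality. -/
private lemma rg_subgrad (hφ : ConvexOn ℝ Set.univ φ) (x y : ℝ) :
    φ x + rg φ x * (y - x) ≤ φ y := by
  rcases lt_trichotomy y x with h | rfl | h
  · have h1 : (φ x - φ y) / (x - y) ≤ rg φ x := slope_le_rg hφ h
    have h2 : (φ x - φ y) / (x - y) * (x - y) = φ x - φ y :=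
      div_mul_cancel₀ _ (by linarith)
    nlinarith [mul_le_mul_of_nonneg_right h1 (by linarith : (0:ℝ) ≤ x - y)]
  · simp
  · have h1 : rg φ x ≤ (φ y - φ x) / (y - x) := rg_le_slope hφ h
    have h2 : (φ y - φ x) / (y - x) * (y - x) = φ y - φ x :=
      div_mul_cancel₀ _ (by linarith)
    nlinarith [mul_le_mul_of_nonneg_right h1 (by linarith : (0:ℝ) ≤ y - x)]

/-- `rg` is monotone. -/
private lemma rg_mono (hφ : ConvexOn ℝ Set.univ φ) : Monotone (rg φ) := by
  intro x x' hxx'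
  rcases eq_or_lt_of_le hxx' with rfl | hxx'
  · exact le_rfl
  refine le_csInf ⟨_, ⟨x' + 1, by simp, rfl⟩⟩ ?_
  rintro - ⟨y, hy, rfl⟩
  have h1 : rg φ x ≤ (φ y - φ x) / (y - x) := rg_le_slope hφ (hxx'.trans hy)
  exact h1.trans (sec_mono_left hφ hxx'.le hy)

/-- Convex domination implies domination of initial partial sums, for antitone sequences. -/
private lemma partial_sums {N : ℕ} {A A₂ : ℕ → ℝ} (hA : Antitone A) (hA₂ : Antitone A₂)
    (hdom : ∀ ψ : ℝ → ℝ, ConvexOn ℝ Set.univ ψ →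
      ∑ i ∈ range N, ψ (A₂ i) ≤ ∑ i ∈ range N, ψ (A i))
    {k : ℕ} (hk : k ≤ N) :
    ∑ i ∈ range k, A₂ i ≤ ∑ i ∈ range k, A i := by
  rcases Nat.eq_zero_or_pos k with rfl | hk0
  · simp
  set t := A (k - 1) with ht
  have hconv : ConvexOn ℝ Set.univ (fun x => max (x - t) 0) := by
    exact (((convexOn_id convex_univ).sub (concaveOn_const t convex_univ)).sup
      (convexOn_const 0 convex_univ))
  have hdom' := hdom _ hconv
  have hAsum : ∑ i ∈ range N, max (A i - t) 0 = ∑ i ∈ range k, (A i - t) := by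
    rw [← Finset.sum_range_add_sum_Ico _ hk]
    have h1 : ∑ i ∈ range k, max (A i - t) 0 = ∑ i ∈ range k, (A i - t) := by
      refine Finset.sum_congr rfl fun i hi => ?_
      rw [Finset.mem_range] at hi
      have : t ≤ A i := hA (by omega)
      simp [max_eq_left, sub_nonneg.mpr this]
    have h2 : ∑ i ∈ Finset.Ico k N, max (A i - t) 0 = 0 := by
      refine Finset.sum_eq_zero fun i hi => ?_
      rw [Finset.mem_Ico] at hi
      have : A i ≤ t := hA (by omega)
      simp [max_eq_right, sub_nonpos.mpr this]
    rw [h1, h2, add_zero]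
  have hA2sum : ∑ i ∈ range k, (A₂ i - t) ≤ ∑ i ∈ range N, max (A₂ i - t) 0 := by
    calc ∑ i ∈ range k, (A₂ i - t) ≤ ∑ i ∈ range k, max (A₂ i - t) 0 :=
          Finset.sum_le_sum fun i _ => le_max_left _ _
      _ ≤ ∑ i ∈ range N, max (A₂ i - t) 0 := by
          refine Finset.sum_le_sum_of_subset_of_nonneg
            (Finset.range_subset_range.mpr hk) fun i _ _ => le_max_right _ _
  have key : ∑ i ∈ range k, (A₂ i - t) ≤ ∑ i ∈ range k, (A i - t) := by
    calc ∑ i ∈ range k, (A₂ i - t) ≤ ∑ i ∈ range N, max (A₂ i - t) 0 := hA2sum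
      _ ≤ ∑ i ∈ range N, max (A i - t) 0 := hdom'
      _ = ∑ i ∈ range k, (A i - t) := hAsum
  simpa [Finset.sum_sub_distrib] using key

end Aux

/-- If the discrete measures of two non-increasing finite sequences `a¹, a²`
(with equal sums) satisfy the convex domination `Σ φ(a¹_r) ≥ Σ φ(a²_r)` for all convex `φ`,
and similarly for `b¹, b²`, then the termwise sums also dominate. -/
theorem stmt2 (N : ℕ) (hN : 1 ≤ N) (a₁ a₂ b₁ b₂ : Fin N → ℝ)
    (ha₁ : Antitone a₁) (ha₂ : Antitone a₂) (hb₁ : Antitone b₁) (hb₂ : Antitone b₂)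
    (hsuma : ∑ r, a₁ r = ∑ r, a₂ r) (hsumb : ∑ r, b₁ r = ∑ r, b₂ r)
    (hdoma : ∀ φ : ℝ → ℝ, ConvexOn ℝ Set.univ φ → ∑ r, φ (a₂ r) ≤ ∑ r, φ (a₁ r))
    (hdomb : ∀ φ : ℝ → ℝ, ConvexOn ℝ Set.univ φ → ∑ r, φ (b₂ r) ≤ ∑ r, φ (b₁ r)) :
    ∀ φ : ℝ → ℝ, ConvexOn ℝ Set.univ φ →
      ∑ r, φ (a₂ r + b₂ r) ≤ ∑ r, φ (a₁ r + b₁ r) := by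
  intro φ hφ
  -- extend the sequences to ℕ
  have hmem : ∀ i : ℕ, min i (N - 1) < N := fun i => by omega
  set A : ℕ → ℝ := fun i => a₁ ⟨min i (N - 1), hmem i⟩ with hAdef
  set A₂ : ℕ → ℝ := fun i => a₂ ⟨min i (N - 1), hmem i⟩ with hA2def
  set B : ℕ → ℝ := fun i => b₁ ⟨min i (N - 1), hmem i⟩ with hBdef
  set B₂ : ℕ → ℝ := fun i => b₂ ⟨min i (N - 1), hmem i⟩ with hB2def
  have hmin : ∀ r : Fin N, (⟨min (r : ℕ) (N - 1), hmem r⟩ : Fin N) = r := by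
    intro r
    have : min (r : ℕ) (N - 1) = (r : ℕ) := by
      have := r.isLt; omega
    simp [this]
  have hext : ∀ (f : Fin N → ℝ) (g : ℝ → ℝ),
      ∑ i ∈ range N, g (f ⟨min i (N - 1), hmem i⟩) = ∑ r : Fin N, g (f r) := by
    intro f g
    rw [← Fin.sum_univ_eq_sum_range (fun i => g (f ⟨min i (N - 1), hmem i⟩)) N]
    exact Finset.sum_congr rfl fun r _ => by rw [hmin r]
  -- antitonicity of the extensions
  have hAnt : ∀ (f : Fin N → ℝ), Antitone f →
      Antitone (fun i : ℕ => f ⟨min i (N - 1), hmem i⟩) := by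
    intro f hf i j hij
    exact hf (by simp only [Fin.mk_le_mk]; omega)
  have hAmono : Antitone A := hAnt a₁ ha₁
  have hA2mono : Antitone A₂ := hAnt a₂ ha₂
  have hBmono : Antitone B := hAnt b₁ hb₁
  have hB2mono : Antitone B₂ := hAnt b₂ hb₂
  -- dominations transferred to range sums
  have hdomA : ∀ ψ : ℝ → ℝ, ConvexOn ℝ Set.univ ψ →
      ∑ i ∈ range N, ψ (A₂ i) ≤ ∑ i ∈ range N, ψ (A i) := by
    intro ψ hψ
    rw [hext a₁ ψ, hext a₂ ψ]; exact hdoma ψ hψ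
  have hdomB : ∀ ψ : ℝ → ℝ, ConvexOn ℝ Set.univ ψ →
      ∑ i ∈ range N, ψ (B₂ i) ≤ ∑ i ∈ range N, ψ (B i) := by
    intro ψ hψ
    rw [hext b₁ ψ, hext b₂ ψ]; exact hdomb ψ hψ
  -- partial sums majorization
  have hpartA : ∀ k ≤ N, ∑ i ∈ range k, A₂ i ≤ ∑ i ∈ range k, A i :=
    fun k hk => partial_sums hAmono hA2mono hdomA hk
  have hpartB : ∀ k ≤ N, ∑ i ∈ range k, B₂ i ≤ ∑ i ∈ range k, B i :=
    fun k hk => partial_sums hBmono hB2mono hdomB hk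
  -- total sums equal
  have htotA : ∑ i ∈ range N, A i = ∑ i ∈ range N, A₂ i := by
    have h1 := hext a₁ id; have h2 := hext a₂ id
    simp only [id] at h1 h2
    rw [h1, h2]; exact hsuma
  have htotB : ∑ i ∈ range N, B i = ∑ i ∈ range N, B₂ i := by
    have h1 := hext b₁ id; have h2 := hext b₂ id
    simp only [id] at h1 h2
    rw [h1, h2]; exact hsumb
  -- the sum sequences
  set c : ℕ → ℝ := fun i => A i + B i with hc
  set d : ℕ → ℝ := fun i => A₂ i + B₂ i with hd
  set u : ℕ → ℝ := fun i => c i - d i with hu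
  set s : ℕ → ℝ := fun i => rg φ (d i) with hs
  have hsmono : Antitone s := fun i j hij => rg_mono hφ (add_le_add (hA2mono hij) (hB2mono hij))
  have hU : ∀ k ≤ N, 0 ≤ ∑ i ∈ range k, u i := by
    intro k hk
    have := add_le_add (hpartA k hk) (hpartB k hk)
    simp only [hu, hc, hd, Finset.sum_sub_distrib, Finset.sum_add_distrib]
    linarith
  have hUN : ∑ i ∈ range N, u i = 0 := by
    simp only [hu, hc, hd, Finset.sum_sub_distrib, Finset.sum_add_distrib]
    rw [htotA, htotB]; ring
  -- Abel summation
  have habel : 0 ≤ ∑ i ∈ range N, s i * u i := by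
    have := Finset.sum_range_by_parts s u N
    simp only [smul_eq_mul] at this
    rw [this, hUN, mul_zero, zero_sub, le_neg, neg_zero]
    refine Finset.sum_nonpos fun i hi => ?_
    rw [Finset.mem_range] at hi
    have h1 : s (i + 1) - s i ≤ 0 := sub_nonpos.mpr (hsmono (Nat.le_succ i))
    have h2 : 0 ≤ ∑ j ∈ range (i + 1), u j := hU (i + 1) (by omega)
    exact mul_nonpos_of_nonpos_of_nonneg h1 h2
  -- subgradient inequality termwise
  have hterm : ∀ i, φ (d i) + s i * u i ≤ φ (c i) := by
    intro i
    have := rg_subgrad hφ (d i) (c i)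
    simpa [hs, hu] using this
  have hfinal : ∑ i ∈ range N, φ (d i) ≤ ∑ i ∈ range N, φ (c i) := by
    have h1 : ∑ i ∈ range N, (φ (d i) + s i * u i) ≤ ∑ i ∈ range N, φ (c i) :=
      Finset.sum_le_sum fun i _ => hterm i
    rw [Finset.sum_add_distrib] at h1
    linarith
  -- convert back
  have hcs : ∑ i ∈ range N, φ (c i) = ∑ r : Fin N, φ (a₁ r + b₁ r) := by
    rw [← Fin.sum_univ_eq_sum_range (fun i => φ (c i)) N]
    exact Finset.sum_congr rfl fun r _ => by simp [hc, hAdef, hBdef, hmin r]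
  have hds : ∑ i ∈ range N, φ (d i) = ∑ r : Fin N, φ (a₂ r + b₂ r) := by
    rw [← Fin.sum_univ_eq_sum_range (fun i => φ (d i)) N]
    exact Finset.sum_congr rfl fun r _ => by simp [hd, hA2def, hB2def, hmin r]
  rw [← hcs, ← hds]
  exact hfinal
end

section
/- Every smooth function φ : ℝ → ℝ with compact support can be written as a difference φ = g − h, where g, h : ℝ → ℝ are each convex, non-increasing, and Lipschitz. -/
open Real Set

noncomputable def auxF (x : ℝ) : ℝ := Real.log (1 + Real.exp (-x))
noncomputable def auxP (x : ℝ) : ℝ := -(Real.exp (-x) / (1 + Real.exp (-x)))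
noncomputable def auxQ (x : ℝ) : ℝ := Real.exp (-x) / (1 + Real.exp (-x)) ^ 2

lemma auxDenom_pos (x : ℝ) : 0 < 1 + Real.exp (-x) := by positivity

lemma hasDerivAt_expneg (x : ℝ) :
    HasDerivAt (fun y : ℝ => Real.exp (-y)) (-Real.exp (-x)) x := by
  exact ((Real.hasDerivAt_exp (-x)).comp x (hasDerivAt_neg x)).congr_deriv (by ring)

lemma hasDerivAt_auxF (x : ℝ) : HasDerivAt auxF (auxP x) x := by
  have hD : HasDerivAt (fun y : ℝ => 1 + Real.exp (-y)) (-Real.exp (-x)) x := by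
    exact (hasDerivAt_expneg x).const_add 1
  have := hD.log (ne_of_gt (auxDenom_pos x))
  have e : auxF = fun y => Real.log (1 + Real.exp (-y)) := rfl
  rw [e]
  simpa [auxP, neg_div] using this

lemma hasDerivAt_auxP (x : ℝ) : HasDerivAt auxP (auxQ x) x := by
  have hD : HasDerivAt (fun y : ℝ => 1 + Real.exp (-y)) (-Real.exp (-x)) x := by
    exact (hasDerivAt_expneg x).const_add 1
  have := ((hasDerivAt_expneg x).div hD (ne_of_gt (auxDenom_pos x))).neg
  refine this.congr_deriv ?_
  have hne := ne_of_gt (auxDenom_pos x)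
  unfold auxQ
  field_simp
  ring

lemma auxP_neg (x : ℝ) : auxP x < 0 := by
  have := auxDenom_pos x
  have := Real.exp_pos (-x)
  unfold auxP
  have : 0 < Real.exp (-x) / (1 + Real.exp (-x)) := by positivity
  linarith

lemma auxP_abs_le_one (x : ℝ) : |auxP x| ≤ 1 := by
  have h1 := auxDenom_pos x
  have h2 := Real.exp_pos (-x)
  rw [abs_le]
  constructor
  · unfold auxP
    rw [neg_le_neg_iff]
    rw [div_le_one h1]
    linarith
  · exact le_of_lt (lt_of_lt_of_le (auxP_neg x) zero_le_one)

lemma auxQ_pos (x : ℝ) : 0 < auxQ x := by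
  have := auxDenom_pos x
  have := Real.exp_pos (-x)
  unfold auxQ
  positivity

lemma auxP_bound {R x : ℝ} (hx : x ∈ Icc (-R) R) :
    Real.exp (-R) / (1 + Real.exp R) ≤ -auxP x := by
  have h1 : Real.exp (-R) ≤ Real.exp (-x) := Real.exp_le_exp.mpr (by linarith [hx.2])
  have h2 : 1 + Real.exp (-x) ≤ 1 + Real.exp R := by
    have := Real.exp_le_exp.mpr (by linarith [hx.1] : -x ≤ R)
    linarith
  have h3 := auxDenom_pos x
  unfold auxP
  rw [neg_neg]
  exact div_le_div₀ (Real.exp_pos (-x)).le h1 h3 h2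

lemma auxQ_bound {R x : ℝ} (hx : x ∈ Icc (-R) R) :
    Real.exp (-R) / (1 + Real.exp R) ^ 2 ≤ auxQ x := by
  have h1 : Real.exp (-R) ≤ Real.exp (-x) := Real.exp_le_exp.mpr (by linarith [hx.2])
  have h2 : 1 + Real.exp (-x) ≤ 1 + Real.exp R := by
    have := Real.exp_le_exp.mpr (by linarith [hx.1] : -x ≤ R)
    linarith
  have h3 := auxDenom_pos x
  have h4 : (1 + Real.exp (-x)) ^ 2 ≤ (1 + Real.exp R) ^ 2 := by
    apply pow_le_pow_left₀ h3.le h2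
  unfold auxQ
  exact div_le_div₀ (Real.exp_pos (-x)).le h1 (by positivity) h4

/-- Every smooth compactly supported function `φ : ℝ → ℝ` is a difference
`φ = g - h` of two convex, non-increasing, Lipschitz functions. -/
theorem stmt6 (φ : ℝ → ℝ) (hsmooth : ContDiff ℝ (⊤ : ℕ∞) φ) (hsupp : HasCompactSupport φ) :
    ∃ g h : ℝ → ℝ, φ = g - h ∧
      ConvexOn ℝ Set.univ g ∧ Antitone g ∧ (∃ K : NNReal, LipschitzWith K g) ∧
      ConvexOn ℝ Set.univ h ∧ Antitone h ∧ (∃ K : NNReal, LipschitzWith K h) := by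
  -- Differentiability facts
  have hs : ContDiff ℝ ((⊤ : ℕ∞) : WithTop ℕ∞) φ := hsmooth.of_le (by simp)
  have hφd : Differentiable ℝ φ := hs.differentiable (by simp)
  have hφ'c : ContDiff ℝ ((⊤ : ℕ∞) : WithTop ℕ∞) (deriv φ) :=
    (contDiff_infty_iff_deriv.mp hs).2
  have hφ'd : Differentiable ℝ (deriv φ) := hφ'c.differentiable (by simp)
  have hφ''c : Continuous (deriv (deriv φ)) :=
    ((contDiff_infty_iff_deriv.mp hφ'c).2).continuous
  -- compact supports
  have hsupp' : HasCompactSupport (deriv φ) := hsupp.deriv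
  have hsupp'' : HasCompactSupport (deriv (deriv φ)) := hsupp'.deriv
  -- bounds
  obtain ⟨L, hL⟩ := hsupp'.exists_bound_of_continuous hφ'c.continuous
  obtain ⟨M, hM⟩ := hsupp''.exists_bound_of_continuous hφ''c
  have hL0 : 0 ≤ L := le_trans (norm_nonneg _) (hL 0)
  have hM0 : 0 ≤ M := le_trans (norm_nonneg _) (hM 0)
  -- support radius
  obtain ⟨r, hr⟩ := hsupp.isBounded.subset_closedBall 0
  set R : ℝ := max r 1 with hRdef
  have hsub : tsupport φ ⊆ Icc (-R) R := by
    intro x hx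
    have := hr hx
    rw [Metric.mem_closedBall, Real.dist_eq, sub_zero] at this
    have : |x| ≤ R := le_trans this (le_max_left _ _)
    rw [abs_le] at this
    exact ⟨this.1, this.2⟩
  have hsub' : tsupport (deriv φ) ⊆ tsupport φ :=
    closure_minimal support_deriv_subset (isClosed_tsupport _)
  have hsub'' : tsupport (deriv (deriv φ)) ⊆ tsupport φ :=
    le_trans (closure_minimal support_deriv_subset (isClosed_tsupport _)) hsub'
  have hzero' : ∀ x, x ∉ Icc (-R) R → deriv φ x = 0 := fun x hx =>
    image_eq_zero_of_notMem_tsupport (fun hmem => hx (hsub (hsub' hmem)))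
  have hzero'' : ∀ x, x ∉ Icc (-R) R → deriv (deriv φ) x = 0 := fun x hx =>
    image_eq_zero_of_notMem_tsupport (fun hmem => hx (hsub (hsub'' hmem)))
  -- constants
  set σ : ℝ := Real.exp (-R) / (1 + Real.exp R) with hσdef
  set δ : ℝ := Real.exp (-R) / (1 + Real.exp R) ^ 2 with hδdef
  have hσpos : 0 < σ := by
    have := Real.exp_pos (-R); have := Real.exp_pos R; positivity
  have hδpos : 0 < δ := by
    have := Real.exp_pos (-R); have := Real.exp_pos R; positivity
  set c : ℝ := M / δ + L / σ with hcdef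
  have hc1 : M / δ ≤ c := by
    have : 0 ≤ L / σ := div_nonneg hL0 hσpos.le
    linarith
  have hc2 : L / σ ≤ c := by
    have : 0 ≤ M / δ := div_nonneg hM0 hδpos.le
    linarith
  have hc0 : 0 ≤ c := le_trans (div_nonneg hM0 hδpos.le) hc1
  -- the two functions
  set g : ℝ → ℝ := fun x => φ x + c * auxF x with hgdef
  set h : ℝ → ℝ := fun x => c * auxF x with hhdef
  -- derivatives of g and h
  have hgD : ∀ x, HasDerivAt g (deriv φ x + c * auxP x) x := fun x =>
    (hφd x).hasDerivAt.add ((hasDerivAt_auxF x).const_mul c)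
  have hhD : ∀ x, HasDerivAt h (c * auxP x) x := fun x =>
    (hasDerivAt_auxF x).const_mul c
  have hgderiv : deriv g = fun x => deriv φ x + c * auxP x :=
    funext fun x => (hgD x).deriv
  have hhderiv : deriv h = fun x => c * auxP x :=
    funext fun x => (hhD x).deriv
  have hgD2 : ∀ x, HasDerivAt (deriv g) (deriv (deriv φ) x + c * auxQ x) x := by
    intro x
    rw [hgderiv]
    exact (hφ'd x).hasDerivAt.add ((hasDerivAt_auxP x).const_mul c)
  have hhD2 : ∀ x, HasDerivAt (deriv h) (c * auxQ x) x := by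
    intro x
    rw [hhderiv]
    exact (hasDerivAt_auxP x).const_mul c
  have hgdiff : Differentiable ℝ g := fun x => (hgD x).differentiableAt
  have hhdiff : Differentiable ℝ h := fun x => (hhD x).differentiableAt
  have hgdiff2 : Differentiable ℝ (deriv g) := fun x => (hgD2 x).differentiableAt
  have hhdiff2 : Differentiable ℝ (deriv h) := fun x => (hhD2 x).differentiableAt
  -- key inequalities
  have keyA : ∀ x, 0 ≤ deriv (deriv φ) x + c * auxQ x := by
    intro x
    by_cases hx : x ∈ Icc (-R) R
    · have h1 : δ ≤ auxQ x := auxQ_bound hx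
      have h2 : M / δ * δ ≤ c * auxQ x :=
        mul_le_mul hc1 h1 hδpos.le hc0
      rw [div_mul_cancel₀ _ (ne_of_gt hδpos)] at h2
      have h3 : -M ≤ deriv (deriv φ) x := by
        have := hM x
        rw [Real.norm_eq_abs, abs_le] at this
        exact this.1
      linarith
    · rw [hzero'' x hx]
      have := auxQ_pos x
      nlinarith
  have keyB : ∀ x, deriv φ x + c * auxP x ≤ 0 := by
    intro x
    by_cases hx : x ∈ Icc (-R) R
    · have h1 : σ ≤ -auxP x := auxP_bound hx
      have h2 : L / σ * σ ≤ c * (-auxP x) :=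
        mul_le_mul hc2 h1 hσpos.le hc0
      rw [div_mul_cancel₀ _ (ne_of_gt hσpos)] at h2
      have h3 : deriv φ x ≤ L := by
        have := hL x
        rw [Real.norm_eq_abs, abs_le] at this
        exact this.2
      linarith
    · rw [hzero' x hx]
      have := auxP_neg x
      nlinarith
  refine ⟨g, h, ?_, ?_, ?_, ?_, ?_, ?_, ?_⟩
  · funext x; simp [hgdef, hhdef]
  · -- g convex
    apply convexOn_univ_of_deriv2_nonneg hgdiff hgdiff2
    intro x
    have : deriv^[2] g x = deriv (deriv g) x := by
      simp [Function.iterate_succ, Function.iterate_one]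
    rw [this, (hgD2 x).deriv]
    exact keyA x
  · -- g antitone
    apply antitone_of_deriv_nonpos hgdiff
    intro x
    rw [(hgD x).deriv]
    exact keyB x
  · -- g Lipschitz
    refine ⟨⟨L + c, by linarith⟩, ?_⟩
    apply lipschitzWith_of_nnnorm_deriv_le hgdiff
    intro x
    refine NNReal.coe_le_coe.mp ?_
    simp only [coe_nnnorm, NNReal.coe_mk]
    rw [(hgD x).deriv, Real.norm_eq_abs]
    have h1 : |deriv φ x| ≤ L := by simpa [Real.norm_eq_abs] using hL x
    have h2 : |c * auxP x| ≤ c := by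
      rw [abs_mul, abs_of_nonneg hc0]
      calc c * |auxP x| ≤ c * 1 := by
            exact mul_le_mul_of_nonneg_left (auxP_abs_le_one x) hc0
        _ = c := mul_one c
    calc |deriv φ x + c * auxP x| ≤ |deriv φ x| + |c * auxP x| := abs_add_le _ _
      _ ≤ L + c := add_le_add h1 h2
  · -- h convex
    apply convexOn_univ_of_deriv2_nonneg hhdiff hhdiff2
    intro x
    have : deriv^[2] h x = deriv (deriv h) x := by
      simp [Function.iterate_succ, Function.iterate_one]
    rw [this, (hhD2 x).deriv]
    exact mul_nonneg hc0 (auxQ_pos x).le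
  · -- h antitone
    apply antitone_of_deriv_nonpos hhdiff
    intro x
    rw [(hhD x).deriv]
    exact mul_nonpos_of_nonneg_of_nonpos hc0 (auxP_neg x).le
  · -- h Lipschitz
    refine ⟨⟨c, hc0⟩, ?_⟩
    apply lipschitzWith_of_nnnorm_deriv_le hhdiff
    intro x
    refine NNReal.coe_le_coe.mp ?_
    simp only [coe_nnnorm, NNReal.coe_mk]
    rw [(hhD x).deriv, Real.norm_eq_abs, abs_mul, abs_of_nonneg hc0]
    calc c * |auxP x| ≤ c * 1 := mul_le_mul_of_nonneg_left (auxP_abs_le_one x) hc0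
      _ = c := mul_one c
end

section
/- Let V be a finite-dimensional complex vector space, W ⊆ V a subspace with 0 < dim W < dim V, and F a filtration on V. Equip W with the induced filtration F^t W := (F^t V) ∩ W and the quotient V/W with the induced filtration F^t (V/W) := image of F^t V under the quotient map V → V/W. Then the jumping measures satisfy, as (finite) measures on ℝ: dim V · η(F, V) = dim W · η(F, W) + dim(V/W) · η(F, V/W). -/
open MeasureTheory

/-- For an antitone `f : ℝ → ℕ` bounded by `n`, attaining `n` near `-∞` and `0` near `+∞`,
the value of the sum of Dirac masses at the jumping numbers on `Iic x` is `n - sSup (f '' Ioi x)`. -/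
lemma jump_count (f : ℝ → ℕ) (hf : Antitone f) (n : ℕ) (hle : ∀ t, f t ≤ n)
    (hsmall : ∃ t₀ : ℝ, ∀ t ≤ t₀, n ≤ f t) (hbig : ∃ t₁ : ℝ, ∀ t, t₁ ≤ t → f t = 0) (x : ℝ) :
    (∑ j ∈ Finset.range n, Measure.dirac (sSup {t : ℝ | j + 1 ≤ f t})) (Set.Iic x)
      = ((n - sSup (f '' Set.Ioi x) : ℕ) : ENNReal) := by
  obtain ⟨t₀, ht₀⟩ := hsmall
  obtain ⟨t₁, ht₁⟩ := hbig
  set M := sSup (f '' Set.Ioi x) with hM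
  have hne : (f '' Set.Ioi x).Nonempty := ⟨f (x + 1), ⟨x + 1, by simp, rfl⟩⟩
  have hbdd : BddAbove (f '' Set.Ioi x) := ⟨n, fun m ⟨t, _, ht⟩ => ht ▸ hle t⟩
  obtain ⟨tM, htM, htMeq⟩ := Nat.sSup_mem hne hbdd
  have hMle : M ≤ n := by rw [hM, ← htMeq]; exact hle tM
  have key : ∀ j < n, (sSup {t : ℝ | j + 1 ≤ f t} ≤ x ↔ M ≤ j) := by
    intro j hj
    have hSne : ({t : ℝ | j + 1 ≤ f t}).Nonempty := ⟨t₀, le_trans hj (ht₀ t₀ le_rfl)⟩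
    have hSbdd : BddAbove {t : ℝ | j + 1 ≤ f t} := by
      refine ⟨t₁, fun t ht => ?_⟩
      by_contra h
      push_neg at h
      have := ht₁ t h.le
      simp only [Set.mem_setOf_eq, this] at ht
      omega
    constructor
    · intro h
      by_contra hMj
      push_neg at hMj
      have h1 : j + 1 ≤ f tM := by rw [htMeq]; exact hMj
      have h2 : tM ≤ sSup {t : ℝ | j + 1 ≤ f t} := le_csSup hSbdd h1
      have h3 : x < tM := Set.mem_Ioi.mp htM
      linarith
    · intro h
      by_contra hx
      push_neg at hx
      obtain ⟨t, ht, hxt⟩ := (lt_csSup_iff hSbdd hSne).mp hx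
      have : f t ≤ M := le_csSup hbdd ⟨t, hxt, rfl⟩
      simp only [Set.mem_setOf_eq] at ht
      omega
  rw [Measure.finset_sum_apply]
  have : ∀ j ∈ Finset.range n,
      Measure.dirac (sSup {t : ℝ | j + 1 ≤ f t}) (Set.Iic x)
        = if M ≤ j then (1 : ENNReal) else 0 := by
    intro j hj
    rw [Measure.dirac_apply' _ measurableSet_Iic]
    simp only [Set.indicator, Set.mem_Iic, Pi.one_apply]
    exact if_congr (key j (Finset.mem_range.mp hj)) rfl rfl
  rw [Finset.sum_congr rfl this, ← Finset.sum_filter, Finset.sum_const, nsmul_eq_mul, mul_one]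
  have hfil : (Finset.range n).filter (fun j => M ≤ j) = Finset.Ico M n := by
    ext j
    simp only [Finset.mem_filter, Finset.mem_range, Finset.mem_Ico]
    omega
  rw [hfil, Nat.card_Ico]

/-- For a filtration `F` on a finite-dimensional complex vector space `V` and a
subspace `0 < dim W < dim V`, with the induced filtrations on `W` (intersection) and on
`V/W` (image under the quotient map), the jumping measures satisfy
`dim V • η(F,V) = dim W • η(F,W) + dim(V/W) • η(F,V/W)`, i.e. the corresponding sums of
Dirac masses at the jumping numbers agree. -/
theorem stmt7 (V : Type*) [AddCommGroup V] [Module ℂ V] [FiniteDimensional ℂ V]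
    (W : Submodule ℂ V)
    (hW0 : 0 < Module.finrank ℂ W) (hWV : Module.finrank ℂ W < Module.finrank ℂ V)
    (F : ℝ → Submodule ℂ V) (hanti : Antitone F)
    (hsmall : ∃ t₀ : ℝ, ∀ t ≤ t₀, F t = ⊤)
    (hbig : ∃ t₁ : ℝ, ∀ t, t₁ ≤ t → F t = ⊥) :
    ∑ j ∈ Finset.range (Module.finrank ℂ V),
        Measure.dirac (sSup {t : ℝ | j + 1 ≤ Module.finrank ℂ (F t)})
      = (∑ j ∈ Finset.range (Module.finrank ℂ W),
          Measure.dirac (sSup {t : ℝ | j + 1 ≤ Module.finrank ℂ (F t ⊓ W : Submodule ℂ V)}))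
        + ∑ j ∈ Finset.range (Module.finrank ℂ (V ⧸ W)),
            Measure.dirac
              (sSup {t : ℝ | j + 1 ≤ Module.finrank ℂ (Submodule.map W.mkQ (F t))}) := by
  classical
  obtain ⟨t₀, ht₀⟩ := hsmall
  obtain ⟨t₁, ht₁⟩ := hbig
  set n := Module.finrank ℂ V with hn
  set a := Module.finrank ℂ W with ha
  set b := Module.finrank ℂ (V ⧸ W) with hb
  have hab : b + a = n := Submodule.finrank_quotient_add_finrank W
  set f : ℝ → ℕ := fun t => Module.finrank ℂ (F t) with hfdef
  set g : ℝ → ℕ := fun t => Module.finrank ℂ (F t ⊓ W : Submodule ℂ V) with hgdef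
  set h : ℝ → ℕ := fun t => Module.finrank ℂ (Submodule.map W.mkQ (F t)) with hhdef
  have hsumfgh : ∀ t, f t = g t + h t := by
    intro t
    have hrn := LinearMap.finrank_range_add_finrank_ker (W.mkQ.comp (F t).subtype)
    rw [LinearMap.range_comp, Submodule.range_subtype, LinearMap.ker_comp,
      Submodule.ker_mkQ] at hrn
    have hker : Module.finrank ℂ (Submodule.comap (F t).subtype W)
        = Module.finrank ℂ (F t ⊓ W : Submodule ℂ V) := by
      rw [← Submodule.finrank_map_subtype_eq (F t) (Submodule.comap (F t).subtype W),
        Submodule.map_comap_subtype]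
    simp only [hfdef, hgdef, hhdef]
    omega
  have hganti : Antitone g := fun s t hst =>
    Submodule.finrank_mono (inf_le_inf_right W (hanti hst))
  have hhanti : Antitone h := fun s t hst =>
    Submodule.finrank_mono (Submodule.map_mono (hanti hst))
  have hfle : ∀ t, f t ≤ n := fun t => Submodule.finrank_le _
  have hgle : ∀ t, g t ≤ a := fun t => Submodule.finrank_mono (inf_le_right : F t ⊓ W ≤ W)
  have hhle : ∀ t, h t ≤ b := fun t => Submodule.finrank_le _
  have hfsmall : ∀ t ≤ t₀, n ≤ f t := by
    intro t ht
    show n ≤ Module.finrank ℂ (F t)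
    rw [ht₀ t ht, finrank_top]
  have hgsmall : ∀ t ≤ t₀, a ≤ g t := by
    intro t ht
    show a ≤ Module.finrank ℂ (F t ⊓ W : Submodule ℂ V)
    rw [ht₀ t ht, top_inf_eq]
  have hhsmall : ∀ t ≤ t₀, b ≤ h t := by
    intro t ht
    show b ≤ Module.finrank ℂ (Submodule.map W.mkQ (F t))
    rw [ht₀ t ht, Submodule.map_top, Submodule.range_mkQ, finrank_top]
  have hfbig : ∀ t, t₁ ≤ t → f t = 0 := by
    intro t ht; simp [hfdef, ht₁ t ht]
  have hgbig : ∀ t, t₁ ≤ t → g t = 0 := by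
    intro t ht; simp [hgdef, ht₁ t ht]
  have hhbig : ∀ t, t₁ ≤ t → h t = 0 := by
    intro t ht; simp [hhdef, ht₁ t ht]
  have hMsum : ∀ x : ℝ, sSup (f '' Set.Ioi x) = sSup (g '' Set.Ioi x) + sSup (h '' Set.Ioi x) := by
    intro x
    have hne : ∀ k : ℝ → ℕ, (k '' Set.Ioi x).Nonempty :=
      fun k => ⟨k (x + 1), ⟨x + 1, by simp, rfl⟩⟩
    have hbddf : BddAbove (f '' Set.Ioi x) := ⟨n, fun m ⟨t, _, ht⟩ => ht ▸ hfle t⟩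
    have hbddg : BddAbove (g '' Set.Ioi x) := ⟨a, fun m ⟨t, _, ht⟩ => ht ▸ hgle t⟩
    have hbddh : BddAbove (h '' Set.Ioi x) := ⟨b, fun m ⟨t, _, ht⟩ => ht ▸ hhle t⟩
    obtain ⟨tf, htf, htfeq⟩ := Nat.sSup_mem (hne f) hbddf
    obtain ⟨tg, htg, htgeq⟩ := Nat.sSup_mem (hne g) hbddg
    obtain ⟨th, hth, htheq⟩ := Nat.sSup_mem (hne h) hbddh
    apply le_antisymm
    · rw [← htfeq, hsumfgh tf]
      exact add_le_add (le_csSup hbddg ⟨tf, htf, rfl⟩) (le_csSup hbddh ⟨tf, htf, rfl⟩)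
    · rw [← htgeq, ← htheq]
      set tm := min tg th with htm
      have htmIoi : tm ∈ Set.Ioi x := lt_min (Set.mem_Ioi.mp htg) (Set.mem_Ioi.mp hth)
      have h1 : g tg ≤ g tm := hganti (min_le_left _ _)
      have h2 : h th ≤ h tm := hhanti (min_le_right _ _)
      calc g tg + h th ≤ g tm + h tm := add_le_add h1 h2
        _ = f tm := (hsumfgh tm).symm
        _ ≤ sSup (f '' Set.Ioi x) := le_csSup hbddf ⟨tm, htmIoi, rfl⟩
  haveI : IsFiniteMeasure (∑ j ∈ Finset.range n,
      Measure.dirac (sSup {t : ℝ | j + 1 ≤ f t})) := by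
    constructor
    rw [Measure.finset_sum_apply]
    simp
  have h1 := fun x => jump_count f (fun s t hst => Submodule.finrank_mono (hanti hst)) n
    hfle ⟨t₀, hfsmall⟩ ⟨t₁, hfbig⟩ x
  have h2 := fun x => jump_count g hganti a hgle ⟨t₀, hgsmall⟩ ⟨t₁, hgbig⟩ x
  have h3 := fun x => jump_count h hhanti b hhle ⟨t₀, hhsmall⟩ ⟨t₁, hhbig⟩ x
  refine Measure.ext_of_Iic _ _ (fun x => ?_)
  rw [Measure.add_apply, h1 x, h2 x, h3 x]
  have hMg : sSup (g '' Set.Ioi x) ≤ a := by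
    obtain ⟨t, _, ht⟩ := Nat.sSup_mem (⟨g (x+1), ⟨x+1, by simp, rfl⟩⟩ :
      (g '' Set.Ioi x).Nonempty) ⟨a, fun m ⟨t, _, ht⟩ => ht ▸ hgle t⟩
    rw [← ht]; exact hgle t
  have hMh : sSup (h '' Set.Ioi x) ≤ b := by
    obtain ⟨t, _, ht⟩ := Nat.sSup_mem (⟨h (x+1), ⟨x+1, by simp, rfl⟩⟩ :
      (h '' Set.Ioi x).Nonempty) ⟨b, fun m ⟨t, _, ht⟩ => ht ▸ hhle t⟩
    rw [← ht]; exact hhle t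
  rw [← Nat.cast_add]
  congr 1
  have := hMsum x
  omega
end

section
/- Let n ≥ 1 and for each k ∈ ℕ let S_k denote the space of homogeneous polynomials of degree k in ℂ[X_1,…,X_n] (with S_0 = ℂ). Let F be a submultiplicative filtration on the graded algebra ⊕_k S_k: for each k and t ∈ ℝ a subspace F^t S_k ⊆ S_k, non-increasing in t, equal to S_k for t sufficiently small and to 0 for t sufficiently big, with F^t S_k · F^s S_l ⊆ F^{t+s} S_{k+l} for all t, s ∈ ℝ and k, l ∈ ℕ. Let φ : ℝ → ℝ be convex and non-increasing. For k ≥ 1 let N_k := dim S_k and let e_1(k) ≥ ⋯ ≥ e_{N_k}(k) be the jumping numbers of F on S_k. Then the sequence u(k) := (k/N_k) · Σ_{j=1}^{N_k} φ(e_j(k)/k) is subadditive: u(k+l) ≤ u(k) + u(l) for all k, l ≥ 1. -/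
/-!
Fix a monomial order and, for a monomial `α` of degree `k`, let `λ_k(α)` be the supremum of the
levels `t` such that `Fᵗ S_k` contains a polynomial with leading monomial `α`. A subspace of `S_k`
has as many leading monomials as its dimension, so the jumping numbers of `F` on `S_k` are the
values `λ_k(α)`; leading monomials are multiplicative, so `λ_k(α) + λ_l(β) ≤ λ_{k+l}(α + β)`.
Thus `u k = k · mean_α φ(λ_k(α) / k)`, the mean over monomials of degree `k`.

The weights `∏ i, (α i + β i).choose (α i)` on pairs `(α, β)` of degrees `(k, l)` have constant
row sums, column sums and sums over each fibre `α + β = γ` (coefficients of `(1 - X)⁻ᵈ` and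
`(1 + X)ᵈ`), so they couple the uniform distributions in degrees `k`, `l` and `k + l`. Averaging
`(k + l) φ(λ_{k+l}(α + β) / (k + l)) ≤ k φ(λ_k(α) / k) + l φ(λ_l(β) / l)`, a consequence of
superadditivity and of `φ` being convex and non-increasing, over this coupling gives the claim.
-/

open Finset MvPolynomial

section JumpingNumbers

theorem List.Pairwise.lt_countP_iff {α : Type*} [Preorder α] {l : List α}
    (hl : l.Pairwise (· ≥ ·)) {p : α → Prop} [DecidablePred p]
    (hp : ∀ ⦃x y⦄, x ≤ y → p x → p y) {j : ℕ} (hj : j < l.length) :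
    j < l.countP (p ·) ↔ p l[j] := by
  induction l generalizing j with
  | nil => simp at hj
  | cons x xs ih =>
    rw [List.pairwise_cons] at hl
    by_cases hx : p x
    · rw [List.countP_cons_of_pos (by simpa using hx)]
      cases j with
      | zero => simpa using hx
      | succ j => simpa using ih hl.2 (by simpa using hj)
    · have hnone : xs.countP (p ·) = 0 :=
        List.countP_eq_zero.2 fun y hy hpy => hx (hp (hl.1 y hy) (by simpa using hpy))
      rw [List.countP_cons_of_neg (by simpa using hx), hnone]
      cases j with
      | zero => simpa using hx
      | succ j => simpa using fun h => hx (hp (hl.1 _ (List.getElem_mem _)) h)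

noncomputable def jumpingNumber (D : ℝ → ℕ) (j : ℕ) : ℝ := sSup {t | j ≤ D t}

/-- If `D t` lies between the number of values `g i > t` and the number of values `g i ≥ t`, then
the jumping numbers of `D` are the values of `g` in decreasing order. -/
theorem Finset.sum_jumpingNumber_eq_sum {ι : Type*} (s : Finset ι) (g : ι → ℝ) {D : ℝ → ℕ}
    (hlo : ∀ t, #{i ∈ s | t < g i} ≤ D t) (hup : ∀ t, D t ≤ #{i ∈ s | t ≤ g i}) (f : ℝ → ℝ) :
    ∑ j ∈ range #s, f (jumpingNumber D (j + 1)) = ∑ i ∈ s, f (g i) := by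
  set L := (s.val.map g).sort (· ≥ ·)
  have hL : L.Pairwise (· ≥ ·) := Multiset.pairwise_sort _ _
  have hlen : L.length = #s := by simp [L]
  have hcount (p : ℝ → Prop) [DecidablePred p] : L.countP (p ·) = #{i ∈ s | p (g i)} := by
    rw [← Multiset.coe_countP, Multiset.sort_eq, Multiset.countP_map, Finset.card_def,
      Finset.filter_val]
  have hjump (j : ℕ) (hj : j < L.length) : jumpingNumber D (j + 1) = L[j] := by
    have hmem (t : ℝ) (ht : t < L[j]) : j + 1 ≤ D t := by
      have := (hL.lt_countP_iff (fun x y hxy htx => htx.trans_le hxy) hj).2 ht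
      rw [hcount (t < ·)] at this
      exact this.trans_le (hlo t)
    have hub : L[j] ∈ upperBounds {t | j + 1 ≤ D t} := fun t ht => by
      refine (hL.lt_countP_iff (fun x y hxy htx => htx.trans hxy) hj).1 ?_
      rw [hcount (t ≤ ·)]
      exact Nat.lt_of_succ_le (ht.trans (hup t))
    refine IsLUB.csSup_eq ⟨hub, fun b hb => ?_⟩ ⟨L[j] - 1, hmem _ (sub_one_lt _)⟩
    exact le_of_forall_lt_imp_le_of_dense fun t ht => hb (hmem t ht)
  calc ∑ j ∈ range #s, f (jumpingNumber D (j + 1))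
      = ∑ j : Fin L.length, f L[(j : ℕ)] := by
        rw [← hlen, Finset.sum_range]
        exact sum_congr rfl fun j _ => by rw [hjump j j.2]
    _ = ∑ i ∈ s, f (g i) := by
        rw [Fin.sum_univ_fun_getElem, ← Multiset.sum_coe, ← Multiset.map_coe, Multiset.sort_eq,
          Multiset.map_map, Finset.sum_eq_multiset_sum]
        rfl

end JumpingNumbers

section Averages

theorem Finset.sum_mul_comp_eq_mul_sum {ι κ R : Type*} [CommSemiring R] [DecidableEq κ]
    {s : Finset ι} {t : Finset κ} {π : ι → κ} (hπ : ∀ i ∈ s, π i ∈ t) {w : ι → R} {c : R}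
    (hw : ∀ y ∈ t, ∑ i ∈ s with π i = y, w i = c) (ψ : κ → R) :
    ∑ i ∈ s, w i * ψ (π i) = c * ∑ y ∈ t, ψ y := by
  rw [← sum_fiberwise_of_maps_to hπ, mul_sum]
  refine sum_congr rfl fun y hy => ?_
  rw [← hw y hy, sum_mul]
  exact sum_congr rfl fun i hi => by rw [(mem_filter.1 hi).2]

theorem Finset.sum_mul_comp_div_sum_eq {ι κ R : Type*} [Field R] [DecidableEq κ]
    {s : Finset ι} {t : Finset κ} {π : ι → κ} (hπ : ∀ i ∈ s, π i ∈ t) {w : ι → R} {c : R}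
    (hc : c ≠ 0) (hw : ∀ y ∈ t, ∑ i ∈ s with π i = y, w i = c) (ψ : κ → R) :
    (∑ i ∈ s, w i * ψ (π i)) / ∑ i ∈ s, w i = (∑ y ∈ t, ψ y) / #t := by
  have htot : ∑ i ∈ s, w i = c * #t := by
    simpa using sum_mul_comp_eq_mul_sum hπ hw (fun _ => (1 : R))
  rw [sum_mul_comp_eq_mul_sum hπ hw, htot, mul_div_mul_left _ _ hc]

theorem ConvexOn.add_mul_apply_div_le {φ : ℝ → ℝ} (hconv : ConvexOn ℝ Set.univ φ)
    (hanti : Antitone φ) {a b x y z : ℝ} (ha : 0 < a) (hb : 0 < b) (hxyz : x + y ≤ z) :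
    (a + b) * φ (z / (a + b)) ≤ a * φ (x / a) + b * φ (y / b) := by
  have hab : 0 < a + b := add_pos ha hb
  have hcomb : a / (a + b) * (x / a) + b / (a + b) * (y / b) = (x + y) / (a + b) := by
    field_simp
  have hconv' := hconv.2 (Set.mem_univ (x / a)) (Set.mem_univ (y / b))
    (div_pos ha hab).le (div_pos hb hab).le (by field_simp)
  simp only [smul_eq_mul, hcomb] at hconv'
  calc (a + b) * φ (z / (a + b)) ≤ (a + b) * φ ((x + y) / (a + b)) := by
        gcongr
        exact hanti (by gcongr)
    _ ≤ (a + b) * (a / (a + b) * φ (x / a) + b / (a + b) * φ (y / b)) := by gcongr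
    _ = a * φ (x / a) + b * φ (y / b) := by field_simp

theorem Finset.sum_product_filter_fst_eq {α β M : Type*} [DecidableEq α] [AddCommMonoid M]
    {s : Finset α} {a : α} (ha : a ∈ s) (t : Finset β) (f : α × β → M) :
    ∑ p ∈ s ×ˢ t with p.1 = a, f p = ∑ b ∈ t, f (a, b) := by
  rw [filter_product_left (· = a), filter_eq' s a, if_pos ha, sum_product, sum_singleton]

theorem Finset.sum_product_filter_snd_eq {α β M : Type*} [DecidableEq β] [AddCommMonoid M]
    (s : Finset α) {t : Finset β} {b : β} (hb : b ∈ t) (f : α × β → M) :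
    ∑ p ∈ s ×ˢ t with p.2 = b, f p = ∑ a ∈ s, f (a, b) := by
  rw [filter_product_right (· = b), filter_eq' t b, if_pos hb, sum_product_right, sum_singleton]

end Averages

section LeadingMonomials

variable {σ K : Type*} [Field K] (m : MonomialOrder σ)

theorem MonomialOrder.linearIndependent_of_injective_degree {ι : Type*}
    {v : ι → MvPolynomial σ K} (hv : ∀ i, v i ≠ 0) (hinj : Function.Injective (m.degree ∘ v)) :
    LinearIndependent K v := by
  classical
  rw [linearIndependent_iff']
  intro s c hsum
  by_contra! hne
  obtain ⟨i₀, hi₀, hc₀⟩ := hne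
  obtain ⟨i, hi, hmax⟩ := exists_max_image {j ∈ s | c j ≠ 0} (fun j => m.toSyn (m.degree (v j)))
    ⟨i₀, mem_filter.2 ⟨hi₀, hc₀⟩⟩
  rw [mem_filter] at hi
  have hcoeff : coeff (m.degree (v i)) (∑ j ∈ s, c j • v j) = c i * m.leadingCoeff (v i) := by
    rw [coeff_sum, sum_eq_single i]
    · rfl
    · intro j hj hji
      by_cases hcj : c j = 0
      · simp [hcj]
      have hlt : m.toSyn (m.degree (v j)) < m.toSyn (m.degree (v i)) :=
        lt_of_le_of_ne (hmax j (mem_filter.2 ⟨hj, hcj⟩)) fun h => hji (hinj (m.toSyn.injective h))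
      rw [coeff_smul, m.coeff_eq_zero_of_lt hlt, smul_zero]
    · exact fun h => absurd hi.1 h
  rw [hsum, coeff_zero] at hcoeff
  exact mul_ne_zero hi.2 (m.leadingCoeff_ne_zero_iff.2 (hv i)) hcoeff.symm

variable [Fintype σ] [DecidableEq σ]

abbrev monomialsOfDegree (σ : Type*) [Fintype σ] [DecidableEq σ] (k : ℕ) : Finset (σ →₀ ℕ) :=
  finsuppAntidiag univ k

lemma mem_monomialsOfDegree {k : ℕ} {d : σ →₀ ℕ} :
    d ∈ monomialsOfDegree σ k ↔ d.degree = k := by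
  simp [Finsupp.degree_eq_sum]

lemma MvPolynomial.IsHomogeneous.support_subset_monomialsOfDegree {k : ℕ}
    {p : MvPolynomial σ K} (hp : p.IsHomogeneous k) : p.support ⊆ monomialsOfDegree σ k :=
  fun d hd => by
    rw [mem_monomialsOfDegree, Finsupp.degree_eq_weight_one]
    exact hp (mem_support_iff.1 hd)

open Classical in
noncomputable def MonomialOrder.leadingDegrees (k : ℕ) (V : Submodule K (MvPolynomial σ K)) :
    Finset (σ →₀ ℕ) :=
  {d ∈ monomialsOfDegree σ k | ∃ p ∈ V, p ≠ 0 ∧ m.degree p = d}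

namespace MonomialOrder

open Classical in
lemma mem_leadingDegrees {k : ℕ} {V : Submodule K (MvPolynomial σ K)} {d : σ →₀ ℕ} :
    d ∈ m.leadingDegrees k V ↔ d ∈ monomialsOfDegree σ k ∧ ∃ p ∈ V, p ≠ 0 ∧ m.degree p = d := by
  unfold leadingDegrees
  exact mem_filter

theorem finrank_eq_card_leadingDegrees {k : ℕ} {V : Submodule K (MvPolynomial σ K)}
    (hV : V ≤ homogeneousSubmodule σ K k) : Module.finrank K V = #(m.leadingDegrees k V) := by
  set D := m.leadingDegrees k V
  let f : V →ₗ[K] D → K := LinearMap.pi fun d => (lcoeff K d.1).comp V.subtype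
  have hf : Function.Injective f := by
    refine (injective_iff_map_eq_zero f).2 fun ⟨p, hp⟩ h => ?_
    by_contra hne
    have hp0 : p ≠ 0 := fun h0 => hne (by simp [h0])
    have hd : m.degree p ∈ D := (m.mem_leadingDegrees).2
      ⟨IsHomogeneous.support_subset_monomialsOfDegree (hV hp) (m.degree_mem_support hp0),
        p, hp, hp0, rfl⟩
    exact mem_support_iff.1 (m.degree_mem_support hp0) (congrFun h ⟨_, hd⟩)
  have : Module.Finite K V := Module.Finite.of_injective f hf
  refine le_antisymm ?_ ?_
  · simpa using LinearMap.finrank_le_finrank_of_injective hf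
  · choose v hvV hv0 hvdeg using fun d : D => (m.mem_leadingDegrees.1 d.2).2
    have hind : LinearIndependent K (fun d => (⟨v d, hvV d⟩ : V)) := by
      refine LinearIndependent.of_comp V.subtype (m.linearIndependent_of_injective_degree hv0 ?_)
      intro d d' h
      exact Subtype.ext ((hvdeg d).symm.trans (h.trans (hvdeg d')))
    simpa using hind.fintype_card_le_finrank

theorem leadingDegrees_homogeneousSubmodule (k : ℕ) :
    m.leadingDegrees k (homogeneousSubmodule σ K k) = monomialsOfDegree σ k := by
  refine Subset.antisymm (fun d hd => (m.mem_leadingDegrees.1 hd).1) fun d hd => ?_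
  classical
  refine m.mem_leadingDegrees.2 ⟨hd, monomial d 1, ?_, by simp, ?_⟩
  · exact isHomogeneous_monomial _ (mem_monomialsOfDegree.1 hd)
  · rw [m.degree_monomial, if_neg one_ne_zero]

end MonomialOrder

end LeadingMonomials

section Coupling

variable {σ : Type*} [Fintype σ] [DecidableEq σ]

def couplingWeight (α β : σ →₀ ℕ) : ℕ := ∏ i, (α i + β i).choose (α i)

variable (σ) in
abbrev couplingPairs (k l : ℕ) : Finset ((σ →₀ ℕ) × (σ →₀ ℕ)) :=
  monomialsOfDegree σ k ×ˢ monomialsOfDegree σ l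

omit [DecidableEq σ] in
lemma couplingWeight_comm (α β : σ →₀ ℕ) : couplingWeight α β = couplingWeight β α := by
  simp only [couplingWeight, add_comm (α _), Nat.choose_symm_add]

theorem sum_couplingWeight_right {k : ℕ} (hk : 0 < k) {α : σ →₀ ℕ}
    (hα : α ∈ monomialsOfDegree σ k) (l : ℕ) :
    ∑ β ∈ monomialsOfDegree σ l, couplingWeight α β
      = (k - 1 + Fintype.card σ + l).choose (k - 1 + Fintype.card σ) := by
  have hdeg : ∑ i, (α i + 1) = k - 1 + Fintype.card σ + 1 := by
    rw [sum_add_distrib, ← Finsupp.degree_eq_sum, mem_monomialsOfDegree.1 hα, sum_const,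
      card_univ, smul_eq_mul, mul_one]
    omega
  have key : ∑ β ∈ monomialsOfDegree σ l, ∏ i, ((α i + β i).choose (α i) : ℤ)
      = PowerSeries.coeff l (∏ i, (PowerSeries.mk 1 : PowerSeries ℤ) ^ (α i + 1)) := by
    simp only [PowerSeries.coeff_prod, PowerSeries.mk_one_pow_eq_mk_choose_add,
      PowerSeries.coeff_mk]
  rw [prod_pow_eq_pow_sum, hdeg, PowerSeries.mk_one_pow_eq_mk_choose_add,
    PowerSeries.coeff_mk] at key
  exact_mod_cast key

theorem sum_prod_choose_eq_choose {n : ℕ} (γ : σ →₀ ℕ) (hγ : γ.degree = n) (k : ℕ) :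
    ∑ μ ∈ monomialsOfDegree σ k, ∏ i, (γ i).choose (μ i) = n.choose k := by
  have hcoeff (a b : ℕ) :
      PowerSeries.coeff b ((1 + PowerSeries.X : PowerSeries ℕ) ^ a) = a.choose b := by
    rw [← Polynomial.coe_one, ← Polynomial.coe_X, ← Polynomial.coe_add, ← Polynomial.coe_pow,
      Polynomial.coeff_coe, Polynomial.coeff_one_add_X_pow, Nat.cast_id]
  have key := PowerSeries.coeff_prod (fun i => (1 + PowerSeries.X : PowerSeries ℕ) ^ γ i) k univ
  rw [prod_pow_eq_pow_sum, ← Finsupp.degree_eq_sum, hγ, hcoeff] at key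
  simp only [hcoeff] at key
  exact key.symm

omit [DecidableEq σ] in
lemma couplingWeight_of_add_eq {α β γ : σ →₀ ℕ} (h : α + β = γ) :
    couplingWeight α β = ∏ i, (γ i).choose (α i) := by
  simp only [couplingWeight, ← h, Finsupp.add_apply]

theorem sum_couplingWeight_fiber {k l : ℕ} {γ : σ →₀ ℕ} (hγ : γ ∈ monomialsOfDegree σ (k + l)) :
    ∑ p ∈ couplingPairs σ k l with p.1 + p.2 = γ, couplingWeight p.1 p.2 = (k + l).choose k := by
  rw [← sum_prod_choose_eq_choose γ (mem_monomialsOfDegree.1 hγ) k]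
  refine sum_bij_ne_zero (fun p _ _ => p.1) (fun p hp _ => (mem_product.1 (mem_filter.1 hp).1).1)
    (fun p hp _ q hq _ hpq => ?_) (fun μ hμ hne => ?_) (fun p hp _ => ?_)
  · have h := (mem_filter.1 hp).2.trans (mem_filter.1 hq).2.symm
    rw [hpq] at h
    exact Prod.ext hpq (add_left_cancel h)
  · have hle : μ ≤ γ := fun i => by
      by_contra h
      exact hne (prod_eq_zero (mem_univ i) (Nat.choose_eq_zero_of_lt (not_le.1 h)))
    have hsub : μ + (γ - μ) = γ := add_tsub_cancel_of_le hle
    have hdeg : (γ - μ).degree = l := by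
      have := congrArg Finsupp.degree hsub
      rw [map_add, mem_monomialsOfDegree.1 hμ, mem_monomialsOfDegree.1 hγ] at this
      omega
    exact ⟨(μ, γ - μ), mem_filter.2 ⟨mem_product.2 ⟨hμ, mem_monomialsOfDegree.2 hdeg⟩, hsub⟩,
      by rwa [couplingWeight_of_add_eq hsub], rfl⟩
  · exact couplingWeight_of_add_eq (mem_filter.1 hp).2

lemma mean_eq_couplingWeight_mean_fst {k : ℕ} (hk : 0 < k) (l : ℕ) (ψ : (σ →₀ ℕ) → ℝ) :
    (∑ α ∈ monomialsOfDegree σ k, ψ α) / #(monomialsOfDegree σ k)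
      = (∑ p ∈ couplingPairs σ k l, couplingWeight p.1 p.2 * ψ p.1)
        / ∑ p ∈ couplingPairs σ k l, (couplingWeight p.1 p.2 : ℝ) := by
  refine (sum_mul_comp_div_sum_eq (fun p hp => (mem_product.1 hp).1)
    (Nat.cast_ne_zero.2 (Nat.choose_pos (Nat.le_add_right (k - 1 + Fintype.card σ) l)).ne')
    (fun α hα => ?_) ψ).symm
  rw [sum_product_filter_fst_eq hα]
  exact_mod_cast sum_couplingWeight_right hk hα l

lemma mean_eq_couplingWeight_mean_snd (k : ℕ) {l : ℕ} (hl : 0 < l) (ψ : (σ →₀ ℕ) → ℝ) :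
    (∑ β ∈ monomialsOfDegree σ l, ψ β) / #(monomialsOfDegree σ l)
      = (∑ p ∈ couplingPairs σ k l, couplingWeight p.1 p.2 * ψ p.2)
        / ∑ p ∈ couplingPairs σ k l, (couplingWeight p.1 p.2 : ℝ) := by
  refine (sum_mul_comp_div_sum_eq (fun p hp => (mem_product.1 hp).2)
    (Nat.cast_ne_zero.2 (Nat.choose_pos (Nat.le_add_right (l - 1 + Fintype.card σ) k)).ne')
    (fun β hβ => ?_) ψ).symm
  rw [sum_product_filter_snd_eq _ hβ]
  simp only [couplingWeight_comm _ β]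
  exact_mod_cast sum_couplingWeight_right hl hβ k

lemma mean_eq_couplingWeight_mean_add (k l : ℕ) (ψ : (σ →₀ ℕ) → ℝ) :
    (∑ γ ∈ monomialsOfDegree σ (k + l), ψ γ) / #(monomialsOfDegree σ (k + l))
      = (∑ p ∈ couplingPairs σ k l, couplingWeight p.1 p.2 * ψ (p.1 + p.2))
        / ∑ p ∈ couplingPairs σ k l, (couplingWeight p.1 p.2 : ℝ) := by
  refine (sum_mul_comp_div_sum_eq (π := fun p : (σ →₀ ℕ) × (σ →₀ ℕ) => p.1 + p.2)
    (fun p hp => ?_) (Nat.cast_ne_zero.2 (Nat.choose_pos (Nat.le_add_right k l)).ne')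
    (fun γ hγ => ?_) ψ).symm
  · obtain ⟨hα, hβ⟩ := mem_product.1 hp
    rw [mem_monomialsOfDegree, map_add, mem_monomialsOfDegree.1 hα, mem_monomialsOfDegree.1 hβ]
  · exact_mod_cast sum_couplingWeight_fiber hγ

variable (σ) in
noncomputable def scaledMean (φ : ℝ → ℝ) (g : ℕ → (σ →₀ ℕ) → ℝ) (k : ℕ) : ℝ :=
  k * (∑ α ∈ monomialsOfDegree σ k, φ (g k α / k)) / #(monomialsOfDegree σ k)

theorem scaledMean_add_le {k l : ℕ} (hk : 0 < k) (hl : 0 < l) {φ : ℝ → ℝ}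
    (hconv : ConvexOn ℝ Set.univ φ) (hanti : Antitone φ) {g : ℕ → (σ →₀ ℕ) → ℝ}
    (hg : ∀ α ∈ monomialsOfDegree σ k, ∀ β ∈ monomialsOfDegree σ l,
      g k α + g l β ≤ g (k + l) (α + β)) :
    scaledMean σ φ g (k + l) ≤ scaledMean σ φ g k + scaledMean σ φ g l := by
  have hpoint (p : (σ →₀ ℕ) × (σ →₀ ℕ)) (hp : p ∈ couplingPairs σ k l) :
      ((k + l : ℕ) : ℝ) * φ (g (k + l) (p.1 + p.2) / (k + l : ℕ))
        ≤ k * φ (g k p.1 / k) + l * φ (g l p.2 / l) := by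
    obtain ⟨hα, hβ⟩ := mem_product.1 hp
    push_cast
    exact hconv.add_mul_apply_div_le hanti (Nat.cast_pos.2 hk) (Nat.cast_pos.2 hl) (hg _ hα _ hβ)
  simp only [scaledMean, mul_div_assoc]
  rw [mean_eq_couplingWeight_mean_add k l, mean_eq_couplingWeight_mean_fst hk l,
    mean_eq_couplingWeight_mean_snd k hl, ← mul_div_assoc, ← mul_div_assoc, ← mul_div_assoc,
    ← add_div, mul_sum, mul_sum, mul_sum, ← sum_add_distrib]
  gcongr with p hp
  have := mul_le_mul_of_nonneg_left (hpoint p hp) (Nat.cast_nonneg (couplingWeight p.1 p.2))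
  linarith

end Coupling

section Filtration

variable {σ K : Type*} [Field K] (m : MonomialOrder σ)
  (F : ℕ → ℝ → Submodule K (MvPolynomial σ K))

def leadingLevels (k : ℕ) (α : σ →₀ ℕ) : Set ℝ :=
  {t | ∃ p ∈ F k t, p ≠ 0 ∧ m.degree p = α}

noncomputable def monomialJump (k : ℕ) (α : σ →₀ ℕ) : ℝ := sSup (leadingLevels m F k α)

variable {m F} {k : ℕ}

lemma bddAbove_leadingLevels (hbot : ∃ t₁, ∀ t, t₁ ≤ t → F k t = ⊥) (α : σ →₀ ℕ) :
    BddAbove (leadingLevels m F k α) := by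
  obtain ⟨t₁, ht₁⟩ := hbot
  refine ⟨t₁, fun t ⟨p, hp, hp0, _⟩ => not_lt.1 fun ht => hp0 ?_⟩
  rwa [ht₁ t ht.le, Submodule.mem_bot] at hp

variable [Fintype σ] [DecidableEq σ]

lemma leadingLevels_nonempty (htop : ∃ t, F k t = homogeneousSubmodule σ K k)
    {α : σ →₀ ℕ} (hα : α ∈ monomialsOfDegree σ k) : (leadingLevels m F k α).Nonempty := by
  obtain ⟨t, ht⟩ := htop
  obtain ⟨-, p, hp, hp0, hpα⟩ :=
    m.mem_leadingDegrees.1 ((m.leadingDegrees_homogeneousSubmodule (K := K) k).symm ▸ hα)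
  exact ⟨t, p, ht ▸ hp, hp0, hpα⟩

theorem monomialJump_add_le {l : ℕ} (htopk : ∃ t, F k t = homogeneousSubmodule σ K k)
    (htopl : ∃ t, F l t = homogeneousSubmodule σ K l) (hbot : ∃ t₁, ∀ t, t₁ ≤ t → F (k + l) t = ⊥)
    (hmul : ∀ t s p q, p ∈ F k t → q ∈ F l s → p * q ∈ F (k + l) (t + s))
    {α β : σ →₀ ℕ} (hα : α ∈ monomialsOfDegree σ k) (hβ : β ∈ monomialsOfDegree σ l) :
    monomialJump m F k α + monomialJump m F l β ≤ monomialJump m F (k + l) (α + β) := by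
  rw [← le_sub_iff_add_le]
  refine csSup_le (leadingLevels_nonempty htopk hα) fun t ⟨p, hp, hp0, hpα⟩ => ?_
  rw [le_sub_comm]
  refine csSup_le (leadingLevels_nonempty htopl hβ) fun s ⟨q, hq, hq0, hqβ⟩ => ?_
  rw [le_sub_iff_add_le']
  refine le_csSup (bddAbove_leadingLevels hbot _)
    ⟨p * q, hmul t s p q hp hq, mul_ne_zero hp0 hq0, ?_⟩
  rw [m.degree_mul hp0 hq0, hpα, hqβ]

theorem card_lt_monomialJump_le_finrank (htop : ∃ t, F k t = homogeneousSubmodule σ K k)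
    (hanti : Antitone (F k)) (hF : ∀ t, F k t ≤ homogeneousSubmodule σ K k) (t : ℝ) :
    #{α ∈ monomialsOfDegree σ k | t < monomialJump m F k α} ≤ Module.finrank K (F k t) := by
  rw [m.finrank_eq_card_leadingDegrees (hF t)]
  refine card_le_card fun α hα => ?_
  obtain ⟨hα, hlt⟩ := mem_filter.1 hα
  obtain ⟨s, ⟨p, hp, hp0, hpα⟩, hts⟩ :=
    exists_lt_of_lt_csSup (leadingLevels_nonempty htop hα) hlt
  exact m.mem_leadingDegrees.2 ⟨hα, p, hanti hts.le hp, hp0, hpα⟩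

theorem finrank_le_card_le_monomialJump (hbot : ∃ t₁, ∀ t, t₁ ≤ t → F k t = ⊥)
    (hF : ∀ t, F k t ≤ homogeneousSubmodule σ K k) (t : ℝ) :
    Module.finrank K (F k t) ≤ #{α ∈ monomialsOfDegree σ k | t ≤ monomialJump m F k α} := by
  rw [m.finrank_eq_card_leadingDegrees (hF t)]
  refine card_le_card fun α hα => ?_
  obtain ⟨hα, hmem⟩ := m.mem_leadingDegrees.1 hα
  exact mem_filter.2 ⟨hα, le_csSup (bddAbove_leadingLevels hbot α) hmem⟩

end Filtration

theorem stmt8_general (n : ℕ)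
    (F : ℕ → ℝ → Submodule ℂ (MvPolynomial (Fin n) ℂ))
    (hFle : ∀ k t, F k t ≤ MvPolynomial.homogeneousSubmodule (Fin n) ℂ k)
    (hanti : ∀ k, Antitone (F k))
    (hsmall : ∀ k, ∃ t₀ : ℝ, ∀ t ≤ t₀, F k t = MvPolynomial.homogeneousSubmodule (Fin n) ℂ k)
    (hbig : ∀ k, ∃ t₁ : ℝ, ∀ t, t₁ ≤ t → F k t = ⊥)
    (hmul : ∀ (t s : ℝ) (k l : ℕ) (x y : MvPolynomial (Fin n) ℂ),
      x ∈ F k t → y ∈ F l s → x * y ∈ F (k + l) (t + s))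
    (φ : ℝ → ℝ) (hconv : ConvexOn ℝ Set.univ φ) (hantiφ : Antitone φ)
    (N : ℕ → ℕ) (hN : ∀ k, N k = Module.finrank ℂ (MvPolynomial.homogeneousSubmodule (Fin n) ℂ k))
    (e : ℕ → ℕ → ℝ) (he : ∀ k j, e k j = sSup {t : ℝ | j ≤ Module.finrank ℂ (F k t)})
    (u : ℕ → ℝ)
    (hu : ∀ k, u k = ((k : ℝ) / (N k : ℝ)) *
      ∑ j ∈ Finset.range (N k), φ (e k (j + 1) / (k : ℝ))) :
    ∀ k l : ℕ, 1 ≤ k → 1 ≤ l → u (k + l) ≤ u k + u l := by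
  intro k l hk hl
  set m : MonomialOrder (Fin n) := MonomialOrder.lex
  have htop (d : ℕ) : ∃ t, F d t = homogeneousSubmodule (Fin n) ℂ d :=
    (hsmall d).imp fun t ht => ht t le_rfl
  have hu' (d : ℕ) : u d = scaledMean (Fin n) φ (monomialJump m F) d := by
    have hNd : N d = #(monomialsOfDegree (Fin n) d) := by
      rw [hN, m.finrank_eq_card_leadingDegrees le_rfl, m.leadingDegrees_homogeneousSubmodule]
    rw [hu, hNd, div_mul_eq_mul_div, scaledMean, ← sum_jumpingNumber_eq_sum _ (monomialJump m F d)
      (card_lt_monomialJump_le_finrank (htop d) (hanti d) (hFle d))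
      (finrank_le_card_le_monomialJump (hbig d) (hFle d)) (fun x => φ (x / d))]
    simp only [he, jumpingNumber]
  rw [hu', hu', hu']
  exact scaledMean_add_le hk hl hconv hantiφ fun α hα β hβ =>
    monomialJump_add_le (htop k) (htop l) (hbig (k + l)) (fun t s p q => hmul t s k l p q) hα hβ

/-- For a submultiplicative filtration `F` on the graded algebra of homogeneous
polynomials `S_k ⊆ ℂ[X_1,…,X_n]` and a convex non-increasing function `φ`, the sequence
`u k = (k / N_k) Σ_{j=1}^{N_k} φ(e_j(k)/k)` built from the jumping numbers
`e_j(k) = sup {t | dim F^t S_k ≥ j}` is subadditive. -/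
theorem stmt8 (n : ℕ) (hn : 1 ≤ n)
    (F : ℕ → ℝ → Submodule ℂ (MvPolynomial (Fin n) ℂ))
    (hFle : ∀ k t, F k t ≤ MvPolynomial.homogeneousSubmodule (Fin n) ℂ k)
    (hanti : ∀ k, Antitone (F k))
    (hsmall : ∀ k, ∃ t₀ : ℝ, ∀ t ≤ t₀, F k t = MvPolynomial.homogeneousSubmodule (Fin n) ℂ k)
    (hbig : ∀ k, ∃ t₁ : ℝ, ∀ t, t₁ ≤ t → F k t = ⊥)
    (hmul : ∀ (t s : ℝ) (k l : ℕ) (x y : MvPolynomial (Fin n) ℂ),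
      x ∈ F k t → y ∈ F l s → x * y ∈ F (k + l) (t + s))
    (φ : ℝ → ℝ) (hconv : ConvexOn ℝ Set.univ φ) (hantiφ : Antitone φ)
    (N : ℕ → ℕ) (hN : ∀ k, N k = Module.finrank ℂ (MvPolynomial.homogeneousSubmodule (Fin n) ℂ k))
    (e : ℕ → ℕ → ℝ) (he : ∀ k j, e k j = sSup {t : ℝ | j ≤ Module.finrank ℂ (F k t)})
    (u : ℕ → ℝ)
    (hu : ∀ k, u k = ((k : ℝ) / (N k : ℝ)) *
      ∑ j ∈ Finset.range (N k), φ (e k (j + 1) / (k : ℝ))) :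
    ∀ k l : ℕ, 1 ≤ k → 1 ≤ l → u (k + l) ≤ u k + u l :=
  stmt8_general n F hFle hanti hsmall hbig hmul φ hconv hantiφ N hN e he u hu
end

section
/- Let n ≥ 1 be an integer and let F : ℝ → [0,1] and F_l : ℝ → [0,1] (l ∈ ℕ) be non-increasing functions. Define s := sup{λ ∈ ℝ : F(λ) > 0} and s_l := sup{λ ∈ ℝ : F_l(λ) > 0}, and assume all of these are finite real numbers. Assume moreover: (i) F(λ) > 0 for every λ < s; (ii) for every l, the function λ ↦ F_l(λ)^{1/n} is concave on the interval (−∞, s_l); and (iii) F_l(λ) → F(λ) as l → ∞, for every λ ≠ s. Then s_l → s as l → ∞. -/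
open Filter Topology Set

/-!
For `x < s` we have `F(x) > 0`, hence `F_l(x) > 0` and `x ≤ s_l` for large `l`. If instead `s_l`
stayed above some `z > s` along a subsequence, pick `y < s < x < z`: concavity of `F_l^{1/n}` on
`(-∞, s_l) ∋ y, z` gives `θ^n F_l(y) ≤ F_l(x)` with `θ = (z - x)/(z - y)` independent of `l`,
while `F_l(y) → F(y) > 0` and `F_l(x) → F(x) = 0`.
-/

theorem ConcaveOn.div_mul_le {S : Set ℝ} {g : ℝ → ℝ} (hg : ConcaveOn ℝ S g) {x y z : ℝ}
    (hy : y ∈ S) (hz : z ∈ S) (hyx : y ≤ x) (hxz : x < z) (hgz : 0 ≤ g z) :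
    (z - x) / (z - y) * g y ≤ g x := by
  have hzy : 0 < z - y := by linarith
  have ha : 0 ≤ (z - x) / (z - y) := div_nonneg (by linarith) hzy.le
  have hb : 0 ≤ (x - y) / (z - y) := div_nonneg (by linarith) hzy.le
  have hab : (z - x) / (z - y) + (x - y) / (z - y) = 1 := by field_simp; ring
  have hcomb : (z - x) / (z - y) * y + (x - y) / (z - y) * z = x := by field_simp; ring
  have hconc := hg.2 hy hz ha hb hab
  simp only [smul_eq_mul, hcomb] at hconc
  linarith [mul_nonneg hb hgz]

theorem pow_div_mul_le_of_concaveOn_rpow_inv {n : ℕ} (hn : n ≠ 0) {S : Set ℝ} {f : ℝ → ℝ}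
    (hf : 0 ≤ f) (hconc : ConcaveOn ℝ S fun t => f t ^ (n : ℝ)⁻¹) {x y z : ℝ}
    (hy : y ∈ S) (hz : z ∈ S) (hyx : y ≤ x) (hxz : x < z) :
    ((z - x) / (z - y)) ^ n * f y ≤ f x := by
  have hθ : 0 ≤ (z - x) / (z - y) := div_nonneg (by linarith) (by linarith)
  have hroot := hconc.div_mul_le hy hz hyx hxz (Real.rpow_nonneg (hf z) _)
  calc ((z - x) / (z - y)) ^ n * f y
      = ((z - x) / (z - y) * f y ^ (n : ℝ)⁻¹) ^ n := by
        rw [mul_pow, Real.rpow_inv_natCast_pow (hf y) hn]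
    _ ≤ (f x ^ (n : ℝ)⁻¹) ^ n :=
        pow_le_pow_left₀ (mul_nonneg hθ (Real.rpow_nonneg (hf y) _)) hroot n
    _ = f x := Real.rpow_inv_natCast_pow (hf x) hn

theorem eventually_le_of_concaveOn_rpow_inv {n : ℕ} (hn : n ≠ 0) {f : ℕ → ℝ → ℝ} {t : ℕ → ℝ}
    (hf : ∀ l, 0 ≤ f l) (hconc : ∀ l, ConcaveOn ℝ (Iio (t l)) fun x => f l x ^ (n : ℝ)⁻¹)
    {x y z a b : ℝ} (hyx : y < x) (hxz : x < z)
    (hy : Tendsto (fun l => f l y) atTop (𝓝 a)) (ha : 0 < a)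
    (hx : Tendsto (fun l => f l x) atTop (𝓝 b)) (hb : b ≤ 0) :
    ∀ᶠ l in atTop, t l ≤ z := by
  set θ := (z - x) / (z - y)
  have hθ : 0 < θ ^ n := pow_pos (div_pos (by linarith) (by linarith)) n
  filter_upwards [hy.eventually (eventually_gt_nhds (half_lt_self ha)),
    hx.eventually (eventually_lt_nhds (hb.trans_lt (mul_pos hθ (half_pos ha))))] with l hyl hxl
  by_contra! hzt
  have := pow_div_mul_le_of_concaveOn_rpow_inv hn (hf l) (hconc l)
    (show y < t l by linarith) hzt hyx.le hxz
  linarith [mul_lt_mul_of_pos_left hyl hθ]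

theorem stmt9_general (n : ℕ) (hn : 1 ≤ n) (F : ℝ → ℝ) (Fl : ℕ → ℝ → ℝ)
    (hFl01 : ∀ l x, Fl l x ∈ Set.Icc (0 : ℝ) 1)
    (hFbdd : BddAbove {x : ℝ | 0 < F x})
    (hFlbdd : ∀ l, BddAbove {x : ℝ | 0 < Fl l x})
    (s : ℝ) (hs : s = sSup {x : ℝ | 0 < F x})
    (sl : ℕ → ℝ) (hsl : ∀ l, sl l = sSup {x : ℝ | 0 < Fl l x})
    (hpos : ∀ x : ℝ, x < s → 0 < F x)
    (hconc : ∀ l, ConcaveOn ℝ (Set.Iio (sl l)) (fun x => (Fl l x) ^ ((n : ℝ)⁻¹)))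
    (hconv : ∀ x : ℝ, x ≠ s → Tendsto (fun l => Fl l x) atTop (nhds (F x))) :
    Tendsto sl atTop (nhds s) := by
  refine tendsto_order.2 ⟨fun a has => ?_, fun a hsa => ?_⟩
  · obtain ⟨x, hax, hxs⟩ := exists_between has
    filter_upwards [(hconv x hxs.ne).eventually (eventually_gt_nhds (hpos x hxs))] with l hl
    exact hax.trans_le (hsl l ▸ le_csSup (hFlbdd l) hl)
  · obtain ⟨x, hsx, hxa⟩ := exists_between hsa
    obtain ⟨z, hxz, hza⟩ := exists_between hxa
    have hFx : F x ≤ 0 := not_lt.1 fun h => hsx.not_ge (hs ▸ le_csSup hFbdd h)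
    have hys : s - 1 < s := sub_one_lt s
    filter_upwards [eventually_le_of_concaveOn_rpow_inv (by omega) (fun l x => (hFl01 l x).1)
      hconc (hys.trans hsx) hxz (hconv _ hys.ne) (hpos _ hys) (hconv x hsx.ne') hFx] with l hl
    exact hl.trans_lt hza

/-- If `F, F_l : ℝ → [0,1]` are non-increasing with supports bounded above,
`s = sup {λ | F λ > 0}` and `s_l = sup {λ | F_l λ > 0}`, `F > 0` on `(-∞, s)`, each
`F_l^{1/n}` is concave on `(-∞, s_l)`, and `F_l → F` pointwise away from `s`, then
`s_l → s`. -/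
theorem stmt9 (n : ℕ) (hn : 1 ≤ n) (F : ℝ → ℝ) (Fl : ℕ → ℝ → ℝ)
    (hF01 : ∀ x, F x ∈ Set.Icc (0 : ℝ) 1) (hFl01 : ∀ l x, Fl l x ∈ Set.Icc (0 : ℝ) 1)
    (hFanti : Antitone F) (hFlanti : ∀ l, Antitone (Fl l))
    (hFne : {x : ℝ | 0 < F x}.Nonempty) (hFbdd : BddAbove {x : ℝ | 0 < F x})
    (hFlne : ∀ l, {x : ℝ | 0 < Fl l x}.Nonempty)
    (hFlbdd : ∀ l, BddAbove {x : ℝ | 0 < Fl l x})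
    (s : ℝ) (hs : s = sSup {x : ℝ | 0 < F x})
    (sl : ℕ → ℝ) (hsl : ∀ l, sl l = sSup {x : ℝ | 0 < Fl l x})
    (hpos : ∀ x : ℝ, x < s → 0 < F x)
    (hconc : ∀ l, ConcaveOn ℝ (Set.Iio (sl l)) (fun x => (Fl l x) ^ ((n : ℝ)⁻¹)))
    (hconv : ∀ x : ℝ, x ≠ s → Tendsto (fun l => Fl l x) atTop (nhds (F x))) :
    Tendsto sl atTop (nhds s) :=
  stmt9_general n hn F Fl hFl01 hFbdd hFlbdd s hs sl hsl hpos hconc hconv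
end

section
/- Let V be a finite-dimensional complex vector space with a filtration F, and let W ⊆ V be a nonzero subspace equipped with the induced filtration F^t W := (F^t V) ∩ W. Let φ : ℝ → ℝ and M ≥ 0 satisfy |φ(x)| ≤ M for all x ∈ ℝ. Then |(1/dim W) Σ_{j=1}^{dim W} φ(e_j(W)) − (1/dim V) Σ_{j=1}^{dim V} φ(e_j(V))| ≤ 2M·(dim V − dim W)/dim V. -/
open Finset

lemma stmt10_aux (v w : ℕ) (hw : 0 < w) (hwv : w ≤ v)
    (g h : ℝ → ℕ)
    (hg : ∀ s t : ℝ, s ≤ t → g t ≤ g s)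
    (hh : ∀ s t : ℝ, s ≤ t → h t ≤ h s)
    (hhg : ∀ t, h t ≤ g t)
    (hgv : ∀ t, g t ≤ v)
    (hmod : ∀ s t : ℝ, s ≤ t → g t + h s ≤ g s + h t)
    (hdb : ∀ t, g t + w ≤ h t + v)
    (t₀ t₁ : ℝ) (hsm : g t₀ = v ∧ h t₀ = w)
    (hbg : ∀ t, t₁ ≤ t → g t = 0)
    (φ : ℝ → ℝ) (M : ℝ) (hM : 0 ≤ M) (hφ : ∀ x, |φ x| ≤ M) :
    |(1 / (w : ℝ)) * ∑ j ∈ Finset.range w, φ (sSup {t : ℝ | j + 1 ≤ h t})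
      - (1 / (v : ℝ)) * ∑ j ∈ Finset.range v, φ (sSup {t : ℝ | j + 1 ≤ g t})|
      ≤ 2 * M * ((v : ℝ) - (w : ℝ)) / (v : ℝ) := by
  have hv : 0 < v := lt_of_lt_of_le hw hwv
  -- bounded above
  have bddV : ∀ j : ℕ, BddAbove {t : ℝ | j + 1 ≤ g t} := by
    intro j
    refine ⟨t₁, fun t ht => ?_⟩
    by_contra hc
    push_neg at hc
    have := hbg t hc.le
    simp only [Set.mem_setOf_eq] at ht
    omega
  have bddW : ∀ j : ℕ, BddAbove {t : ℝ | j + 1 ≤ h t} := by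
    intro j
    refine ⟨t₁, fun t ht => ?_⟩
    by_contra hc
    push_neg at hc
    have h1 := hbg t hc.le
    have h2 := hhg t
    simp only [Set.mem_setOf_eq] at ht
    omega
  have neV : ∀ j : ℕ, j < v → t₀ ∈ {t : ℝ | j + 1 ≤ g t} := by
    intro j hj; simp only [Set.mem_setOf_eq, hsm.1]; omega
  have neW : ∀ j : ℕ, j < w → t₀ ∈ {t : ℝ | j + 1 ≤ h t} := by
    intro j hj; simp only [Set.mem_setOf_eq, hsm.2]; omega
  -- the shift function
  set eW : ℕ → ℝ := fun j => sSup {t : ℝ | j + 1 ≤ h t} with heW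
  set eV : ℕ → ℝ := fun j => sSup {t : ℝ | j + 1 ≤ g t} with heV
  set c : ℕ → ℕ := fun j => sSup {k : ℕ | ∃ t : ℝ, eW j < t ∧ h t + k ≤ g t} with hc
  have Kne : ∀ j : ℕ, {k : ℕ | ∃ t : ℝ, eW j < t ∧ h t + k ≤ g t}.Nonempty := by
    intro j
    exact ⟨0, eW j + 1, by linarith, by simpa using hhg _⟩
  have Kbdd : ∀ j : ℕ, BddAbove {k : ℕ | ∃ t : ℝ, eW j < t ∧ h t + k ≤ g t} := by
    intro j
    refine ⟨v, fun k hk => ?_⟩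
    obtain ⟨t, _, hle⟩ := hk
    have := hgv t
    omega
  have cK : ∀ j : ℕ, ∃ t : ℝ, eW j < t ∧ h t + c j ≤ g t := by
    intro j
    exact Nat.sSup_mem (Kne j) (Kbdd j)
  have cmax : ∀ j : ℕ, ∀ t : ℝ, eW j < t → g t ≤ h t + c j := by
    intro j t ht
    have hk : (g t - h t) ∈ {k : ℕ | ∃ t : ℝ, eW j < t ∧ h t + k ≤ g t} := by
      exact ⟨t, ht, by have := hhg t; omega⟩
    have h1 : g t - h t ≤ c j := le_csSup (Kbdd j) hk
    have := hhg t
    omega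
  have cbound : ∀ j : ℕ, c j + w ≤ v := by
    intro j
    obtain ⟨t, _, hle⟩ := cK j
    have := hdb t
    omega
  -- eW antitone on range w
  have eWanti : ∀ j j' : ℕ, j ≤ j' → j' < w → eW j' ≤ eW j := by
    intro j j' hjj hj'
    apply csSup_le_csSup (bddW j) ⟨t₀, neW j' hj'⟩
    intro t ht
    simp only [Set.mem_setOf_eq] at ht ⊢
    omega
  have cmono : ∀ j j' : ℕ, j ≤ j' → j' < w → c j ≤ c j' := by
    intro j j' hjj hj'
    apply csSup_le_csSup (Kbdd j') (Kne j)
    rintro k ⟨t, ht, hle⟩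
    exact ⟨t, lt_of_le_of_lt (eWanti j j' hjj hj') ht, hle⟩
  -- key: jumping numbers match
  have hlow : ∀ j : ℕ, j < w → ∀ t : ℝ, t < eW j → j + 1 + c j ≤ g t := by
    intro j hj t ht
    obtain ⟨a, ha, hta⟩ := exists_lt_of_lt_csSup ⟨t₀, neW j hj⟩ ht
    simp only [Set.mem_setOf_eq] at ha
    have h1 : j + 1 ≤ h t := le_trans ha (hh t a hta.le)
    obtain ⟨tw, htw, hcw⟩ := cK j
    have h2 := hmod t tw (le_of_lt (lt_trans ht htw))
    omega
  have key : ∀ j : ℕ, j < w → eV (j + c j) = eW j := by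
    intro j hj
    apply le_antisymm
    · apply csSup_le ⟨t₀, neV (j + c j) (by have := cbound j; omega)⟩
      intro t ht
      simp only [Set.mem_setOf_eq] at ht
      by_contra hcon
      push_neg at hcon
      -- eW j < t, so h t ≤ j and g t ≤ h t + c j
      have h1 : ¬ (j + 1 ≤ h t) := by
        intro habs
        exact absurd (le_csSup (bddW j) habs) (not_le.mpr hcon)
      have h2 := cmax j t hcon
      omega
    · apply le_of_forall_lt
      intro x hx
      obtain ⟨t, hxt, hts⟩ := exists_between hx
      have hmem : t ∈ {t : ℝ | (j + c j) + 1 ≤ g t} := by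
        simp only [Set.mem_setOf_eq]
        have := hlow j hj t hts
        omega
      exact lt_of_lt_of_le hxt (le_csSup (bddV _) hmem)
  -- the injection
  have hσlt : ∀ j : ℕ, j < w → j + c j < v := by
    intro j hj; have := cbound j; omega
  have hσmono : ∀ j j' : ℕ, j < j' → j' < w → j + c j < j' + c j' := by
    intro j j' hjj hj'
    have := cmono j j' hjj.le hj'
    omega
  set T : Finset ℕ := (Finset.range w).image (fun j => j + c j) with hT
  have hinj : Set.InjOn (fun j => j + c j) (Finset.range w) := by
    intro a ha b hb hab
    simp only [Finset.coe_range, Set.mem_Iio] at ha hb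
    rcases lt_trichotomy a b with hlt | heq | hgt
    · exact absurd hab (Nat.ne_of_lt (hσmono a b hlt hb))
    · exact heq
    · exact absurd hab.symm (Nat.ne_of_lt (hσmono b a hgt ha))
  have hTsub : T ⊆ Finset.range v := by
    intro i hi
    simp only [hT, Finset.mem_image, Finset.mem_range] at hi ⊢
    obtain ⟨j, hj, rfl⟩ := hi
    exact hσlt j hj
  have hTcard : T.card = w := by
    rw [hT, Finset.card_image_of_injOn hinj, Finset.card_range]
  have hsum_img : ∑ i ∈ T, φ (eV i) = ∑ j ∈ Finset.range w, φ (eW j) := by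
    rw [hT, Finset.sum_image (fun a ha b hb => hinj ha hb)]
    apply Finset.sum_congr rfl
    intro j hj
    rw [key j (Finset.mem_range.mp hj)]
  have hsplit : ∑ i ∈ Finset.range v \ T, φ (eV i) + ∑ i ∈ T, φ (eV i)
      = ∑ i ∈ Finset.range v, φ (eV i) := Finset.sum_sdiff hTsub
  have hcard_sdiff : (Finset.range v \ T).card = v - w := by
    rw [Finset.card_sdiff_of_subset hTsub, Finset.card_range, hTcard]
  -- bounds
  have habs : ∀ (s : Finset ℕ) (f : ℕ → ℝ), |∑ i ∈ s, φ (f i)| ≤ s.card * M := by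
    intro s f
    calc |∑ i ∈ s, φ (f i)| ≤ ∑ i ∈ s, |φ (f i)| := Finset.abs_sum_le_sum_abs _ _
      _ ≤ ∑ _i ∈ s, M := Finset.sum_le_sum fun i _ => hφ _
      _ = s.card * M := by rw [Finset.sum_const, nsmul_eq_mul]
  set a : ℝ := ∑ j ∈ Finset.range w, φ (eW j) with ha
  set r : ℝ := ∑ i ∈ Finset.range v \ T, φ (eV i) with hr
  have hA : |a| ≤ (w : ℝ) * M := by
    have := habs (Finset.range w) eW
    rwa [Finset.card_range] at this
  have hR : |r| ≤ ((v : ℝ) - w) * M := by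
    have := habs (Finset.range v \ T) eV
    rw [hcard_sdiff] at this
    rwa [Nat.cast_sub hwv] at this
  have hBsum : ∑ i ∈ Finset.range v, φ (eV i) = r + a := by
    rw [← hsplit, hsum_img]
  rw [hBsum]
  have hw' : (0 : ℝ) < w := by exact_mod_cast hw
  have hv' : (0 : ℝ) < v := by exact_mod_cast hv
  have hwv' : (w : ℝ) ≤ v := by exact_mod_cast hwv
  have hD : (0 : ℝ) ≤ (v : ℝ) - w := by linarith
  calc |1 / (w : ℝ) * a - 1 / (v : ℝ) * (r + a)|
      = |a * (((v : ℝ) - w) / (w * v)) + (-r) / v| := by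
        congr 1
        field_simp
        ring
    _ ≤ |a * (((v : ℝ) - w) / (w * v))| + |(-r) / v| := abs_add_le _ _
    _ = |a| * (((v : ℝ) - w) / (w * v)) + |r| / v := by
        rw [abs_mul, abs_div, abs_div, abs_neg, abs_of_nonneg hD,
          abs_of_nonneg (mul_pos hw' hv').le, abs_of_nonneg hv'.le]
    _ ≤ ((w : ℝ) * M) * (((v : ℝ) - w) / (w * v)) + (((v : ℝ) - w) * M) / v := by
        gcongr
    _ = 2 * M * ((v : ℝ) - w) / v := by
        field_simp
        ring

/-- For a filtration `F` on a finite-dimensional complex vector space `V`, a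
nonzero subspace `W` with the induced filtration, and `φ` bounded by `M`, the averages of
`φ` over the jumping numbers of `W` and of `V` differ by at most
`2M(dim V − dim W)/dim V`. -/
theorem stmt10 (V : Type*) [AddCommGroup V] [Module ℂ V] [FiniteDimensional ℂ V]
    (W : Submodule ℂ V) (hW0 : 0 < Module.finrank ℂ W)
    (F : ℝ → Submodule ℂ V) (hanti : Antitone F)
    (hsmall : ∃ t₀ : ℝ, ∀ t ≤ t₀, F t = ⊤)
    (hbig : ∃ t₁ : ℝ, ∀ t, t₁ ≤ t → F t = ⊥)
    (φ : ℝ → ℝ) (M : ℝ) (hM : 0 ≤ M) (hφ : ∀ x : ℝ, |φ x| ≤ M) :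
    |(1 / (Module.finrank ℂ W : ℝ)) *
        ∑ j ∈ Finset.range (Module.finrank ℂ W),
          φ (sSup {t : ℝ | j + 1 ≤ Module.finrank ℂ (F t ⊓ W : Submodule ℂ V)})
      - (1 / (Module.finrank ℂ V : ℝ)) *
          ∑ j ∈ Finset.range (Module.finrank ℂ V),
            φ (sSup {t : ℝ | j + 1 ≤ Module.finrank ℂ (F t)})|
      ≤ 2 * M * ((Module.finrank ℂ V : ℝ) - (Module.finrank ℂ W : ℝ))
          / (Module.finrank ℂ V : ℝ) := by
  obtain ⟨t₀, ht₀⟩ := hsmall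
  obtain ⟨t₁, ht₁⟩ := hbig
  have hsup : ∀ t : ℝ, Module.finrank ℂ (F t ⊔ W : Submodule ℂ V)
      + Module.finrank ℂ (F t ⊓ W : Submodule ℂ V)
      = Module.finrank ℂ (F t) + Module.finrank ℂ W := fun t =>
    Submodule.finrank_sup_add_finrank_inf_eq (F t) W
  exact stmt10_aux (Module.finrank ℂ V) (Module.finrank ℂ W) hW0
    (Submodule.finrank_le W)
    (fun t => Module.finrank ℂ (F t))
    (fun t => Module.finrank ℂ (F t ⊓ W : Submodule ℂ V))
    (fun s t hst => Submodule.finrank_mono (hanti hst))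
    (fun s t hst => Submodule.finrank_mono (inf_le_inf_right W (hanti hst)))
    (fun t => Submodule.finrank_mono inf_le_left)
    (fun t => Submodule.finrank_le (F t))
    (by
      intro s t hst
      have h1 := hsup s
      have h2 := hsup t
      have h3 : Module.finrank ℂ (F t ⊔ W : Submodule ℂ V)
          ≤ Module.finrank ℂ (F s ⊔ W : Submodule ℂ V) :=
        Submodule.finrank_mono (sup_le_sup_right (hanti hst) W)
      omega)
    (by
      intro t
      have h1 := hsup t
      have h2 := Submodule.finrank_le (F t ⊔ W : Submodule ℂ V)
      omega)
    t₀ t₁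
    (by
      constructor
      · rw [ht₀ t₀ le_rfl]; exact finrank_top ℂ V
      · rw [ht₀ t₀ le_rfl, top_inf_eq])
    (by
      intro t ht
      rw [ht₁ t ht]
      exact finrank_bot ℂ V)
    φ M hM hφ
end
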